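/- arXiv:1307.3107 — 3 statements merged into one kernel-verified Lean document; each statement's English description precedes it below -/
import Mathlib

section
/- Let q be a prime power and J ⊆ F_q[X_1,...,X_m] an ideal containing the field equations X_1^q − X_1, ..., X_m^q − X_m. Then the evaluation map sending a coset A + J to the vector of values (A(P_1), ..., A(P_n)), where {P_1,...,P_n} is the set of common zeros of J in F_q^m, is a well-defined injective F_q-linear map from F_q[X_1,...,X_m]/J to F_q^n. -/
/-!
Modulo the field equations every polynomial is congruent to one of degree `< q` in each
variable, and such a polynomial vanishing on all of `F_q^m` is zero; hence the field equations
generate the ideal of polynomials vanishing on `F_q^m`. For a larger ideal `J`, a polynomial `A`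
is congruent modulo the field equations to `∑_c A(c) · 1_c` over all points `c`, where `1_c` is
the indicator polynomial of `c`. The terms with `c ∈ V(J)` vanish if `A` vanishes on `V(J)`, and
for `c ∉ V(J)` some `B ∈ J` has `B(c) ≠ 0`, so `1_c ≡ B(c)⁻¹ B 1_c` lies in `J`. Thus `J` is the
ideal of its own zero set, which is exactly the injectivity of evaluation on the quotient.
-/

open MvPolynomial

/-- `x ^ q = x` gives `x ^ (e + (q - 1)) = x ^ e` for `e ≥ 1`; this is the representative of `e`
in `{0, …, q - 1}` for that relation. -/
def reduceExp (q e : ℕ) : ℕ := if e = 0 then 0 else (e - 1) % (q - 1) + 1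

theorem reduceExp_zero (q : ℕ) : reduceExp q 0 = 0 := rfl

theorem reduceExp_le {q : ℕ} (hq : 1 < q) (e : ℕ) : reduceExp q e ≤ q - 1 := by
  unfold reduceExp
  split_ifs
  · omega
  · have := Nat.mod_lt (e - 1) (show 0 < q - 1 by omega)
    omega

theorem pow_add_mul_sub_one_of_pow_eq_self {M : Type*} [Monoid M] {x : M} {q a : ℕ}
    (h : x ^ q = x) (ha : 1 ≤ a) (k : ℕ) : x ^ (a + k * (q - 1)) = x ^ a := by
  induction k with
  | zero => simp
  | succ k ih =>
    rcases Nat.eq_zero_or_pos q with rfl | hq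
    · simp
    calc x ^ (a + (k + 1) * (q - 1)) = x ^ (a + k * (q - 1) - 1) * x ^ q := by
          rw [← pow_add]; congr 1; rw [add_mul]; omega
      _ = x ^ (a + k * (q - 1)) := by
          rw [h, ← pow_succ]; congr 1; omega
      _ = x ^ a := ih

theorem pow_reduceExp {M : Type*} [Monoid M] {x : M} {q : ℕ} (h : x ^ q = x) (e : ℕ) :
    x ^ reduceExp q e = x ^ e := by
  unfold reduceExp
  split_ifs with he
  · rw [he]
  · rw [← pow_add_mul_sub_one_of_pow_eq_self h (Nat.succ_pos _) ((e - 1) / (q - 1))]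
    congr 1
    have := Nat.mod_add_div (e - 1) (q - 1)
    rw [mul_comm] at this
    omega

namespace MvPolynomial

variable {σ R : Type*} [CommRing R]

theorem mem_restrictDegree_iff_degreeOf_le {p : MvPolynomial σ R} {n : ℕ} :
    p ∈ restrictDegree σ R n ↔ ∀ i, degreeOf i p ≤ n := by
  simp only [mem_restrictDegree, degreeOf_le_iff]
  exact ⟨fun h i s hs => h s hs i, fun h s hs i => h i s hs⟩

theorem rename_mem_restrictDegree {τ : Type*} (e : σ ≃ τ) {p : MvPolynomial σ R} {n : ℕ}
    (hp : p ∈ restrictDegree σ R n) : rename e p ∈ restrictDegree τ R n := by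
  rw [mem_restrictDegree_iff_degreeOf_le] at hp ⊢
  intro j
  rw [← e.apply_symm_apply j, degreeOf_rename_of_injective e.injective]
  exact hp _

theorem exists_mem_restrictDegree_sub_mem {q : ℕ} (hq : 1 < q) {I : Ideal (MvPolynomial σ R)}
    (hI : ∀ i, X i ^ q - X i ∈ I) (p : MvPolynomial σ R) :
    ∃ r ∈ restrictDegree σ R (q - 1), p - r ∈ I := by
  induction p using MvPolynomial.induction_on' with
  | monomial d c =>
    refine ⟨monomial (d.mapRange (reduceExp q) (reduceExp_zero q)) c, ?_, ?_⟩
    · classical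
      rw [mem_restrictDegree]
      intro s hs i
      rcases eq_or_ne c 0 with rfl | hc
      · simp at hs
      · rw [support_monomial, if_neg hc, Finset.mem_singleton] at hs
        rw [hs, Finsupp.mapRange_apply]
        exact reduceExp_le hq _
    · rw [← Ideal.Quotient.eq, monomial_eq, monomial_eq, map_mul, map_mul, map_finsuppProd,
        map_finsuppProd, Finsupp.prod_mapRange_index (fun _ => by rw [pow_zero, map_one])]
      congr 1
      refine Finsupp.prod_congr fun i _ => ?_
      simp only [map_pow]
      refine (pow_reduceExp ?_ _).symm
      rw [← map_pow, Ideal.Quotient.eq]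
      exact hI i
  | add p₁ p₂ ih₁ ih₂ =>
    obtain ⟨r₁, hr₁, h₁⟩ := ih₁
    obtain ⟨r₂, hr₂, h₂⟩ := ih₂
    refine ⟨r₁ + r₂, add_mem hr₁ hr₂, ?_⟩
    rw [add_sub_add_comm]
    exact add_mem h₁ h₂

section FiniteField

universe u

variable {K : Type u} [Field K] [Fintype K]

/-- `MvPolynomial.eq_zero_of_eval_eq_zero` without its requirement that `σ` and `K` live in the
same universe. -/
theorem eq_zero_of_eval_eq_zero' [Finite σ] (p : MvPolynomial σ K)
    (h : ∀ v : σ → K, eval v p = 0) (hp : p ∈ restrictDegree σ K (Fintype.card K - 1)) :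
    p = 0 := by
  let e : σ ≃ ULift.{u} (Fin (Nat.card σ)) := (Finite.equivFin σ).trans Equiv.ulift.symm
  have : rename e p = 0 := by
    refine eq_zero_of_eval_eq_zero _ K _ (fun v => ?_) (rename_mem_restrictDegree e hp)
    rw [eval_rename]
    exact h _
  exact (map_eq_zero_iff _ (rename_injective e e.injective)).mp this

theorem vanishingIdeal_univ [Finite σ] :
    vanishingIdeal K (Set.univ : Set (σ → K)) =
      Ideal.span (Set.range fun i => X i ^ Fintype.card K - X i) := by
  have hspan : Ideal.span (Set.range fun i => X i ^ Fintype.card K - X i) ≤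
      vanishingIdeal K (Set.univ : Set (σ → K)) := by
    rw [Ideal.span_le]
    rintro _ ⟨i, rfl⟩ v -
    simp [FiniteField.pow_card]
  refine le_antisymm (fun p hp => ?_) hspan
  obtain ⟨r, hr, hpr⟩ := exists_mem_restrictDegree_sub_mem (Fintype.one_lt_card (α := K))
    (fun i => Ideal.subset_span (Set.mem_range_self i)) p
  suffices r = 0 by rwa [this, sub_zero] at hpr
  refine eq_zero_of_eval_eq_zero' r (fun v => ?_) hr
  have hpv : eval v p = 0 := hp v trivial
  have hprv : eval v (p - r) = 0 := hspan hpr v trivial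
  rwa [map_sub, hpv, zero_sub, neg_eq_zero] at hprv

theorem vanishingIdeal_univ_le [Finite σ] {I : Ideal (MvPolynomial σ K)}
    (hI : ∀ i, X i ^ Fintype.card K - X i ∈ I) :
    vanishingIdeal K (Set.univ : Set (σ → K)) ≤ I := by
  rw [vanishingIdeal_univ, Ideal.span_le]
  rintro _ ⟨i, rfl⟩
  exact hI i

variable [Fintype σ]

theorem sub_sum_indicator_mem_vanishingIdeal_univ [DecidableEq σ] (p : MvPolynomial σ K) :
    p - ∑ c : σ → K, C (eval c p) * indicator c ∈ vanishingIdeal K (Set.univ : Set (σ → K)) := by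
  rintro v -
  change eval v _ = 0
  rw [map_sub, map_sum, Finset.sum_eq_single v, map_mul, eval_C,
    eval_indicator_apply_eq_one, mul_one, sub_self]
  · intro c _ hc
    rw [map_mul, eval_indicator_apply_eq_zero v c (Ne.symm hc), mul_zero]
  · exact fun h => (h (Finset.mem_univ v)).elim

theorem indicator_mem_of_notMem_zeroLocus {I : Ideal (MvPolynomial σ K)}
    (hI : ∀ i, X i ^ Fintype.card K - X i ∈ I) {c : σ → K} (hc : c ∉ zeroLocus K I) :
    indicator c ∈ I := by
  obtain ⟨B, hBI, hBc⟩ : ∃ B ∈ I, eval c B ≠ 0 := by simpa using hc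
  have hdiff : indicator c - C (eval c B)⁻¹ * B * indicator c ∈ I := by
    refine vanishingIdeal_univ_le hI fun v _ => ?_
    change eval v _ = 0
    rcases eq_or_ne v c with rfl | hvc
    · simp [eval_indicator_apply_eq_one, hBc]
    · simp [eval_indicator_apply_eq_zero v c hvc]
  exact (Submodule.sub_mem_iff_left I (I.mul_mem_right _ (I.mul_mem_left _ hBI))).mp hdiff

theorem vanishingIdeal_zeroLocus_eq {I : Ideal (MvPolynomial σ K)}
    (hI : ∀ i, X i ^ Fintype.card K - X i ∈ I) : vanishingIdeal K (zeroLocus K I) = I := by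
  classical
  refine le_antisymm (fun p hp => ?_) (le_vanishingIdeal_zeroLocus I)
  have hsum : ∑ c : σ → K, C (eval c p) * indicator c ∈ I := by
    refine Ideal.sum_mem _ fun c _ => ?_
    by_cases hc : c ∈ zeroLocus K I
    · rw [show eval c p = 0 from hp c hc, C_0, zero_mul]
      exact I.zero_mem
    · exact I.mul_mem_left _ (indicator_mem_of_notMem_zeroLocus hI hc)
  exact (Submodule.sub_mem_iff_left I hsum).mp
    (vanishingIdeal_univ_le hI (sub_sum_indicator_mem_vanishingIdeal_univ p))

end FiniteField

end MvPolynomial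

theorem stmt_0_general (q m : ℕ) (F : Type*) [Field F] [Fintype F]
    (hcard : Fintype.card F = q) (J : Ideal (MvPolynomial (Fin m) F))
    (hJ : ∀ i : Fin m, (X i : MvPolynomial (Fin m) F) ^ q - X i ∈ J) :
    ∃ ev : (MvPolynomial (Fin m) F ⧸ J) →ₗ[F]
      ({P : Fin m → F // ∀ B ∈ J, eval P B = 0} → F),
      Function.Injective ev ∧
      ∀ (A : MvPolynomial (Fin m) F) (P : {P : Fin m → F // ∀ B ∈ J, eval P B = 0}),
        ev (Ideal.Quotient.mk J A) P = eval P.1 A := by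
  subst hcard
  let ev := LinearMap.pi fun P : {P : Fin m → F // ∀ B ∈ J, eval P B = 0} =>
    (Ideal.Quotient.liftₐ J (aeval P.1) P.2).toLinearMap
  refine ⟨ev, (injective_iff_map_eq_zero ev).mpr fun a ha => ?_, fun A P => rfl⟩
  obtain ⟨A, rfl⟩ := Ideal.Quotient.mk_surjective a
  rw [Ideal.Quotient.eq_zero_iff_mem, ← vanishingIdeal_zeroLocus_eq hJ]
  exact fun P hP => congrFun ha ⟨P, hP⟩

/-- The evaluation map on the quotient by an ideal containing the field equations is a
well-defined injective linear map to functions on the variety. -/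
theorem stmt_0 (q m : ℕ) (hq : IsPrimePow q) (F : Type*) [Field F] [Fintype F]
    (hcard : Fintype.card F = q) (J : Ideal (MvPolynomial (Fin m) F))
    (hJ : ∀ i : Fin m, (X i : MvPolynomial (Fin m) F) ^ q - X i ∈ J) :
    ∃ ev : (MvPolynomial (Fin m) F ⧸ J) →ₗ[F]
      ({P : Fin m → F // ∀ B ∈ J, eval P B = 0} → F),
      Function.Injective ev ∧
      ∀ (A : MvPolynomial (Fin m) F) (P : {P : Fin m → F // ∀ B ∈ J, eval P B = 0}),
        ev (Ideal.Quotient.mk J A) P = eval P.1 A :=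
  stmt_0_general q m F hcard J hJ
end

section
/- Let k be a field, J ⊆ k[X_1,...,X_m] an ideal, and ≺ a monomial ordering. Then the set of cosets {M + J : M ∈ Δ_≺(J)} forms a basis of the quotient ring k[X_1,...,X_m]/J as a vector space over k. -/
open MvPolynomial

/-- The leading monomial (multidegree) of a multivariate polynomial with respect to a
monomial order. -/
noncomputable def lmDeg {σ : Type*} {F : Type*} [CommSemiring F]
    (ord : MonomialOrder σ) (f : MvPolynomial σ F) : σ →₀ ℕ :=
  ord.toSyn.symm (f.support.sup ord.toSyn)

/-!
The polynomials supported on the footprint `Δ(J)` form a linear complement of `J`. They meet `J`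
only in `0`, because a nonzero element of `J` has its leading monomial outside `Δ(J)`. They span
modulo `J`, because dividing `f` by all nonzero elements of `J` leaves a remainder none of whose
monomials is divisible by a leading monomial of `J`, so all of them lie in `Δ(J)`. The monomials
are a basis of the polynomial ring, so the cosets of those in `Δ(J)` are a basis of the quotient.
-/

open Submodule

theorem LinearIndependent.map_and_span_eq_top_of_isCompl_ker {ι R M M' : Type*} [Ring R]
    [AddCommGroup M] [Module R M] [AddCommGroup M'] [Module R M'] {v : ι → M}
    (hv : LinearIndependent R v) {f : M →ₗ[R] M'} (hf : Function.Surjective f)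
    (h : IsCompl (span R (Set.range v)) (LinearMap.ker f)) :
    LinearIndependent R (f ∘ v) ∧ span R (Set.range (f ∘ v)) = ⊤ := by
  refine ⟨hv.map h.disjoint, ?_⟩
  rw [Set.range_comp, span_image, LinearMap.map_eq_top_iff (LinearMap.range_eq_top.mpr hf)]
  exact h.sup_eq_top

namespace MonomialOrder

variable {σ R : Type*} (ord : MonomialOrder σ)

def footprint [CommSemiring R] (J : Ideal (MvPolynomial σ R)) : Set (σ →₀ ℕ) :=
  {μ | ∀ f ∈ J, f ≠ 0 → ord.degree f ≠ μ}

theorem disjoint_restrictSupport_footprint [CommSemiring R] (J : Ideal (MvPolynomial σ R)) :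
    Disjoint (restrictSupport R (ord.footprint J)) (J.restrictScalars R) := by
  refine disjoint_def.mpr fun p hp hpJ => ?_
  by_contra hp0
  exact hp (ord.degree_mem_support hp0) p hpJ hp0 rfl

theorem restrictSupport_footprint_sup_eq_top [Field R] (J : Ideal (MvPolynomial σ R)) :
    restrictSupport R (ord.footprint J) ⊔ J.restrictScalars R = ⊤ := by
  refine eq_top_iff.mpr fun f _ => ?_
  obtain ⟨g, r, rfl, -, hr⟩ := ord.div_set (B := J \ {0})
    (fun b hb => isUnit_iff_ne_zero.mpr (ord.leadingCoeff_ne_zero_iff.mpr hb.2)) f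
  have hspan : span (MvPolynomial σ R)
      (Set.range fun b : ↥((J : Set (MvPolynomial σ R)) \ {0}) => (b : MvPolynomial σ R)) ≤ J :=
    span_le.mpr (Set.range_subset_iff.mpr fun b => b.2.1)
  rw [add_comm]
  refine mem_sup.mpr ⟨r, fun c hc b hbJ hb0 hbc => hr c hc b ⟨hbJ, hb0⟩ hbc.le, _, ?_, rfl⟩
  exact hspan (Finsupp.mem_span_range_iff_exists_finsupp.mpr
    ⟨g, (Finsupp.linearCombination_apply _ _).symm⟩)

theorem isCompl_restrictSupport_footprint [Field R] (J : Ideal (MvPolynomial σ R)) :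
    IsCompl (restrictSupport R (ord.footprint J)) (J.restrictScalars R) :=
  ⟨ord.disjoint_restrictSupport_footprint J,
    codisjoint_iff.mpr (ord.restrictSupport_footprint_sup_eq_top J)⟩

end MonomialOrder

/-- The cosets of the monomials in the footprint of an ideal `J` form a basis of the
quotient ring `k[X₁,…,Xₘ]/J` as a `k`-vector space. -/
theorem stmt_2 (k : Type*) [Field k] (m : ℕ) (J : Ideal (MvPolynomial (Fin m) k))
    (ord : MonomialOrder (Fin m)) :
    LinearIndependent k
      (fun μ : {μ : Fin m →₀ ℕ | ∀ f ∈ J, f ≠ 0 → lmDeg ord f ≠ μ} =>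
        Ideal.Quotient.mk J (monomial μ.1 (1 : k))) ∧
    Submodule.span k
      (Set.range (fun μ : {μ : Fin m →₀ ℕ | ∀ f ∈ J, f ≠ 0 → lmDeg ord f ≠ μ} =>
        Ideal.Quotient.mk J (monomial μ.1 (1 : k)))) = ⊤ := by
  have hv : LinearIndependent k (fun μ : ord.footprint J => monomial μ.1 (1 : k)) :=
    (basisMonomials (Fin m) k).linearIndependent.comp _ Subtype.val_injective
  have hspan : span k (Set.range fun μ : ord.footprint J => monomial μ.1 (1 : k)) =
      restrictSupport k (ord.footprint J) := by
    rw [restrictSupport_eq_span, Set.image_eq_range]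
  have hker : LinearMap.ker (Ideal.Quotient.mkₐ k J).toLinearMap = J.restrictScalars k := by
    ext
    simp [Ideal.Quotient.eq_zero_iff_mem]
  have hcompl := ord.isCompl_restrictSupport_footprint J
  rw [← hspan, ← hker] at hcompl
  exact hv.map_and_span_eq_top_of_isCompl_ker (f := (Ideal.Quotient.mkₐ k J).toLinearMap)
    (Ideal.Quotient.mkₐ_surjective k J) hcompl
end

section
/- Let U = {u_1,...,u_n}, V = {v_1,...,v_n}, W = {w_1,...,w_n} be three bases of F_q^n. For a nonzero vector c, define ρ̄_W(c) = i if c ∈ Span{w_1,...,w_i} \ Span{w_1,...,w_{i−1}}. Let c = Σ_{s=1}^t a_s u_{i_s} with a_t ≠ 0 and i_1 < ... < i_t. Suppose there exist indices j_1,...,j_σ ∈ {1,...,n} and distinct values l_1 < ... < l_σ such that for each r, ρ̄_W(u_{i_t} ∗ v_{j_r}) = l_r and for every s < t, ρ̄_W(u_{i_s} ∗ v_{j_r}) < l_r. Then the Hamming weight of c satisfies w_H(c) ≥ σ. -/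
/-!
Multiplying `c` by `v_{j_r}` gives `d_r = c ∗ v_{j_r} = Σ aₛ u_{iₛ} ∗ v_{j_r}`. By the OWB condition the
last term has `ρ̄_W = l_r` and all others smaller, so `ρ̄_W(d_r) = l_r`. The `d_r` have distinct
`ρ̄_W`-values, hence are linearly independent, and they all vanish outside the support of `c`,
so there are at most `w_H(c)` of them.
-/

open Submodule Finset

section

variable {K M : Type*} [DivisionRing K] [AddCommGroup M] [Module K M]

theorem linearIndependent_of_notMem_of_lt {ι : Type*} [LinearOrder ι] {d : ι → M}
    (P : ι → Submodule K M) (hnot : ∀ r, d r ∉ P r) (hlt : ∀ r' r, r' < r → d r' ∈ P r) :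
    LinearIndependent K d := by
  classical
  rw [linearIndependent_iff']
  intro s g hg i hi
  by_contra hgi
  obtain ⟨R, hR, hmax⟩ := (s.filter (g · ≠ 0)).exists_max_image id ⟨i, by simp [hi, hgi]⟩
  simp only [mem_filter, id] at hR hmax
  have hrest : ∑ r ∈ s.erase R, g r • d r ∈ P R := by
    refine sum_mem fun r hr => ?_
    by_cases hgr : g r = 0
    · simp [hgr]
    · exact smul_mem _ _ <| hlt r R <|
        (hmax r ⟨mem_of_mem_erase hr, hgr⟩).lt_of_ne (ne_of_mem_erase hr)
  rw [← add_sum_erase s _ hR.1] at hg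
  have hRmem : g R • d R ∈ P R := by
    rw [eq_neg_of_add_eq_zero_left hg]
    exact neg_mem hrest
  exact hnot R ((smul_mem_iff _ hR.2).1 hRmem)

theorem sum_smul_notMem_of_last_notMem {t : ℕ} {Q : Submodule K M} {a : Fin (t + 1) → K}
    {y : Fin (t + 1) → M} (ha : a (Fin.last t) ≠ 0) (hlast : y (Fin.last t) ∉ Q)
    (hy : ∀ s < Fin.last t, y s ∈ Q) : ∑ s, a s • y s ∉ Q := by
  rw [Fin.sum_univ_castSucc,
    Submodule.add_mem_iff_right _ (sum_mem fun s _ => smul_mem _ _ (hy _ s.castSucc_lt_last)),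
    smul_mem_iff _ ha]
  exact hlast

end

theorem card_le_hammingNorm_of_linearIndependent {ι κ K : Type*} [Fintype ι] [Fintype κ]
    [Field K] [DecidableEq K] {c : κ → K} {d : ι → κ → K} (hd : LinearIndependent K d)
    (hsupp : ∀ r k, c k = 0 → d r k = 0) : Fintype.card ι ≤ hammingNorm c := by
  let π : (κ → K) →ₗ[K] ({k // c k ≠ 0} → K) := LinearMap.funLeft K K Subtype.val
  have hspan : span K (Set.range d) ≤ Submodule.pi {k | c k = 0} fun _ => ⊥ :=
    span_le.mpr <| Set.range_subset_iff.mpr fun r k hk => by simpa using hsupp r k hk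
  have hdisj : Disjoint (span K (Set.range d)) (LinearMap.ker π) := by
    rw [Submodule.disjoint_def]
    intro x hx hπx
    funext k
    by_cases hk : c k = 0
    · simpa using hspan hx k hk
    · exact congrFun hπx ⟨k, hk⟩
  calc Fintype.card ι ≤ Module.finrank K ({k // c k ≠ 0} → K) :=
        (hd.map hdisj).fintype_card_le_finrank
    _ = hammingNorm c := by
        rw [Module.finrank_fintype_fun_eq_card, Fintype.card_subtype]; rfl

theorem stmt_14_general (F : Type*) [Field F] [DecidableEq F] (n t σ : ℕ)
    (u v w : Fin n → (Fin n → F))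
    (aa : Fin (t + 1) → F) (ii : Fin (t + 1) → Fin n)
    (hat : aa (Fin.last t) ≠ 0)
    (c : Fin n → F) (hc : c = ∑ s, aa s • u (ii s))
    (j : Fin σ → Fin n) (l : Fin σ → ℕ) (hl : StrictMono l)
    (h1 : ∀ r, u (ii (Fin.last t)) * v (j r) ∈
        Submodule.span F (w '' {k : Fin n | (k : ℕ) < l r}) ∧
      u (ii (Fin.last t)) * v (j r) ∉
        Submodule.span F (w '' {k : Fin n | (k : ℕ) < l r - 1}))
    (h2 : ∀ r, ∀ s : Fin (t + 1), s < Fin.last t →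
      u (ii s) * v (j r) ∈ Submodule.span F (w '' {k : Fin n | (k : ℕ) < l r - 1})) :
    σ ≤ hammingNorm c := by
  set W : ℕ → Submodule F (Fin n → F) := fun m => span F (w '' {k : Fin n | (k : ℕ) < m})
  have hW : Monotone W := fun m m' h =>
    span_mono (Set.image_mono fun k (hk : (k : ℕ) < m) => hk.trans_le h)
  set d : Fin σ → Fin n → F := fun r => c * v (j r)
  have hd : ∀ r, d r = ∑ s, aa s • (u (ii s) * v (j r)) := fun r => by
    simp only [d, hc, Finset.sum_mul, smul_mul_assoc]
  have hmem : ∀ r, d r ∈ W (l r) := fun r => by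
    rw [hd]
    refine sum_mem fun s _ => smul_mem _ _ ?_
    rcases (Fin.le_last s).eq_or_lt with rfl | hs
    · exact (h1 r).1
    · exact hW (Nat.sub_le _ _) (h2 r s hs)
  have hnot : ∀ r, d r ∉ W (l r - 1) := fun r => by
    rw [hd]
    exact sum_smul_notMem_of_last_notMem hat (h1 r).2 (h2 r)
  have hli : LinearIndependent F d := linearIndependent_of_notMem_of_lt (fun r => W (l r - 1))
    hnot fun r' r h => hW (Nat.le_sub_one_of_lt (hl h)) (hmem r')
  simpa using card_le_hammingNorm_of_linearIndependent hli fun r k hk => by simp [d, hk]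

/-- Feng–Rao style bound for primary linear codes: if `c = Σ aₛ u_{iₛ}` with `a_t ≠ 0` and
there are indices `j₁,…,j_σ` and distinct values `l₁ < … < l_σ` such that
`ρ̄_W(u_{i_t} ∗ v_{j_r}) = l_r` and `ρ̄_W(u_{i_s} ∗ v_{j_r}) < l_r` for all `s < t` (the OWB
condition), then `w_H(c) ≥ σ`. Here `ρ̄_W(x) = l` is expressed as membership of `x` in the
span of the first `l` vectors of `W` but not of the first `l - 1`, and `ρ̄_W(x) < l` as
membership in the span of the first `l - 1` vectors. -/
theorem stmt_14 (F : Type*) [Field F] [DecidableEq F] (n t σ : ℕ)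
    (u v w : Fin n → (Fin n → F))
    (hu : LinearIndependent F u) (hv : LinearIndependent F v)
    (hw : LinearIndependent F w)
    (aa : Fin (t + 1) → F) (ii : Fin (t + 1) → Fin n) (hii : StrictMono ii)
    (hat : aa (Fin.last t) ≠ 0)
    (c : Fin n → F) (hc : c = ∑ s, aa s • u (ii s))
    (j : Fin σ → Fin n) (l : Fin σ → ℕ) (hl : StrictMono l)
    (hlr : ∀ r, 1 ≤ l r ∧ l r ≤ n)
    (h1 : ∀ r, u (ii (Fin.last t)) * v (j r) ∈
        Submodule.span F (w '' {k : Fin n | (k : ℕ) < l r}) ∧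
      u (ii (Fin.last t)) * v (j r) ∉
        Submodule.span F (w '' {k : Fin n | (k : ℕ) < l r - 1}))
    (h2 : ∀ r, ∀ s : Fin (t + 1), s < Fin.last t →
      u (ii s) * v (j r) ∈ Submodule.span F (w '' {k : Fin n | (k : ℕ) < l r - 1})) :
    σ ≤ hammingNorm c :=
  stmt_14_general F n t σ u v w aa ii hat c hc j l hl h1 h2
end
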